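/- Let H be the complete s-uniform t-partite hypergraph with sides V_1, …, V_t. The independence complex Ind(H) is shellable if and only if at least t−1 of the sides V_1, …, V_t consist of exactly one vertex. -/

import Mathlib

open Finset

/-- The vertex set `V = V_1 ∪ ⋯ ∪ V_t` of the multipartite hypergraph with sides `Vs`. -/
def vertexSet {α : Type*} [DecidableEq α] {t : ℕ} (Vs : Fin t → Finset α) : Finset α :=
  Finset.univ.biUnion Vs

/-- `e` is an edge of the complete `s`-uniform `t`-partite hypergraph with sides `Vs`:
`e ⊆ V`, `|e| = s`, and `|e ∩ V_i| ≤ 1` for every side. -/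
def IsEdge {α : Type*} [DecidableEq α] {t : ℕ} (Vs : Fin t → Finset α) (s : ℕ)
    (e : Finset α) : Prop :=
  e ⊆ vertexSet Vs ∧ e.card = s ∧ ∀ i : Fin t, (e ∩ Vs i).card ≤ 1

/-- `F` is an independent set: a subset of `V` containing no edge. -/
def Indep {α : Type*} [DecidableEq α] {t : ℕ} (Vs : Fin t → Finset α) (s : ℕ)
    (F : Finset α) : Prop :=
  F ⊆ vertexSet Vs ∧ ∀ e : Finset α, IsEdge Vs s e → ¬ e ⊆ F

/-- `F` is a facet of the independence complex, i.e. a maximal independent set. -/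
def IsFacetInd {α : Type*} [DecidableEq α] {t : ℕ} (Vs : Fin t → Finset α) (s : ℕ)
    (F : Finset α) : Prop :=
  Indep Vs s F ∧ ∀ G : Finset α, Indep Vs s G → F ⊆ G → F = G

set_option linter.unusedSectionVars false
set_option linter.unusedVariables false
set_option maxHeartbeats 1000000


section Colex
variable {t : ℕ}

/-- Binary encoding of a subset of `Fin t`. -/
def fval (A : Finset (Fin t)) : ℕ := ∑ i ∈ A, 2 ^ (i : ℕ)

lemma sum_range_two_pow (n : ℕ) : ∑ i ∈ Finset.range n, 2 ^ i = 2 ^ n - 1 := by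
  induction n with
  | zero => simp
  | succ n ih =>
    rw [Finset.sum_range_succ, ih]
    have h1 : 1 ≤ 2 ^ n := Nat.one_le_two_pow
    omega

lemma fval_lt_of_bound {A : Finset (Fin t)} {n : ℕ} (h : ∀ i ∈ A, (i : ℕ) < n) :
    fval A < 2 ^ n := by
  have himg : fval A = ∑ x ∈ A.image (fun i : Fin t => (i : ℕ)), 2 ^ x := by
    rw [Finset.sum_image]
    · rfl
    · intro a _ b _ hab; exact Fin.val_injective hab
  have hsub : A.image (fun i : Fin t => (i : ℕ)) ⊆ Finset.range n := by
    intro x hx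
    obtain ⟨i, hi, rfl⟩ := Finset.mem_image.1 hx
    exact Finset.mem_range.2 (h i hi)
  have := Finset.sum_le_sum_of_subset (f := fun x => 2 ^ x) hsub
  have h2 : (1:ℕ) ≤ 2 ^ n := Nat.one_le_two_pow
  rw [himg]
  calc ∑ x ∈ A.image (fun i : Fin t => (i : ℕ)), 2 ^ x
      ≤ ∑ x ∈ Finset.range n, 2 ^ x := this
    _ = 2 ^ n - 1 := sum_range_two_pow n
    _ < 2 ^ n := by omega

lemma fval_lt (A : Finset (Fin t)) : fval A < 2 ^ t :=
  fval_lt_of_bound fun i _ => i.isLt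

lemma fval_lt_fval_core {A B : Finset (Fin t)} {p : Fin t} (hpA : p ∈ A) (hpB : p ∉ B)
    (hq : ∀ q ∈ B, q ∉ A → (q : ℕ) < (p : ℕ)) : fval B < fval A := by
  have hsplitA : fval (A \ B) + fval (A ∩ B) = fval A := by
    have := Finset.sum_sdiff (f := fun i : Fin t => 2 ^ (i : ℕ))
      (Finset.inter_subset_left (s₁ := A) (s₂ := B))
    rw [Finset.sdiff_inter_self_left] at this
    exact this
  have hsplitB : fval (B \ A) + fval (B ∩ A) = fval B := by
    have := Finset.sum_sdiff (f := fun i : Fin t => 2 ^ (i : ℕ))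
      (Finset.inter_subset_left (s₁ := B) (s₂ := A))
    rw [Finset.sdiff_inter_self_left] at this
    exact this
  have hBA : fval (B \ A) < 2 ^ (p : ℕ) := by
    apply fval_lt_of_bound
    intro q hqmem
    rw [Finset.mem_sdiff] at hqmem
    exact hq q hqmem.1 hqmem.2
  have hAB : 2 ^ (p : ℕ) ≤ fval (A \ B) := by
    apply Finset.single_le_sum (f := fun i : Fin t => 2 ^ (i : ℕ))
    · intro i _; positivity
    · exact Finset.mem_sdiff.2 ⟨hpA, hpB⟩
  have hic : fval (A ∩ B) = fval (B ∩ A) := by rw [Finset.inter_comm]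
  omega

lemma fval_injective : Function.Injective (fval (t := t)) := by
  intro A B h
  by_contra hne
  have hD : ((A \ B) ∪ (B \ A)).Nonempty := by
    rw [Finset.nonempty_iff_ne_empty]
    intro hemp
    rw [Finset.union_eq_empty, Finset.sdiff_eq_empty_iff_subset,
      Finset.sdiff_eq_empty_iff_subset] at hemp
    exact hne (Finset.Subset.antisymm hemp.1 hemp.2)
  obtain ⟨p, hpmem, hmax⟩ : ∃ p, p ∈ (A \ B) ∪ (B \ A) ∧ ∀ q ∈ (A \ B) ∪ (B \ A), q ≤ p :=
    ⟨_, ((A \ B) ∪ (B \ A)).max'_mem hD, fun q hq => Finset.le_max' _ q hq⟩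
  rw [Finset.mem_union, Finset.mem_sdiff, Finset.mem_sdiff] at hpmem
  rcases hpmem with ⟨h1, h2⟩ | ⟨h1, h2⟩
  · have : fval B < fval A := by
      apply fval_lt_fval_core h1 h2
      intro q hq1 hq2
      have hle := hmax q (Finset.mem_union.2 (Or.inr (Finset.mem_sdiff.2 ⟨hq1, hq2⟩)))
      have hne' : q ≠ p := fun he => h2 (he ▸ hq1)
      exact Fin.lt_iff_val_lt_val.1 (lt_of_le_of_ne hle hne')
    omega
  · have : fval A < fval B := by
      apply fval_lt_fval_core h1 h2
      intro q hq1 hq2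
      have hle := hmax q (Finset.mem_union.2 (Or.inl (Finset.mem_sdiff.2 ⟨hq1, hq2⟩)))
      have hne' : q ≠ p := fun he => h2 (he ▸ hq1)
      exact Fin.lt_iff_val_lt_val.1 (lt_of_le_of_ne hle hne')
    omega

lemma exists_swap_elt {A B : Finset (Fin t)} (h : fval B < fval A) :
    ∃ p ∈ A, p ∉ B ∧ ∀ q ∈ B, q ∉ A → (q : ℕ) < (p : ℕ) := by
  have hne : A ≠ B := fun he => by rw [he] at h; omega
  have hD : ((A \ B) ∪ (B \ A)).Nonempty := by
    rw [Finset.nonempty_iff_ne_empty]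
    intro hemp
    rw [Finset.union_eq_empty, Finset.sdiff_eq_empty_iff_subset,
      Finset.sdiff_eq_empty_iff_subset] at hemp
    exact hne (Finset.Subset.antisymm hemp.1 hemp.2)
  obtain ⟨p, hpmem, hmax⟩ : ∃ p, p ∈ (A \ B) ∪ (B \ A) ∧ ∀ q ∈ (A \ B) ∪ (B \ A), q ≤ p :=
    ⟨_, ((A \ B) ∪ (B \ A)).max'_mem hD, fun q hq => Finset.le_max' _ q hq⟩
  rw [Finset.mem_union, Finset.mem_sdiff, Finset.mem_sdiff] at hpmem
  rcases hpmem with ⟨h1, h2⟩ | ⟨h1, h2⟩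
  · refine ⟨p, h1, h2, ?_⟩
    intro q hq1 hq2
    have hle := hmax q (Finset.mem_union.2 (Or.inr (Finset.mem_sdiff.2 ⟨hq1, hq2⟩)))
    have hne' : q ≠ p := fun he => h2 (he ▸ hq1)
    exact Fin.lt_iff_val_lt_val.1 (lt_of_le_of_ne hle hne')
  · exfalso
    have : fval A < fval B := by
      apply fval_lt_fval_core h1 h2
      intro q hq1 hq2
      have hle := hmax q (Finset.mem_union.2 (Or.inl (Finset.mem_sdiff.2 ⟨hq1, hq2⟩)))
      have hne' : q ≠ p := fun he => h2 (he ▸ hq1)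
      exact Fin.lt_iff_val_lt_val.1 (lt_of_le_of_ne hle hne')
    omega

end Colex

section HyperAux
variable {α : Type*} [DecidableEq α] {t s : ℕ} {Vs : Fin t → Finset α}

lemma part_unique (hdisj : ∀ i j : Fin t, i ≠ j → Disjoint (Vs i) (Vs j))
    {x : α} {p q : Fin t} (hp : x ∈ Vs p) (hq : x ∈ Vs q) : p = q := by
  by_contra hne
  exact (Finset.disjoint_left.1 (hdisj p q hne) hp) hq

lemma diff_biUnion (hdisj : ∀ i j : Fin t, i ≠ j → Disjoint (Vs i) (Vs j))
    (A B : Finset (Fin t)) :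
    A.biUnion Vs \ B.biUnion Vs = (A \ B).biUnion Vs := by
  ext x
  simp only [Finset.mem_sdiff, Finset.mem_biUnion]
  constructor
  · rintro ⟨⟨p, hpA, hxp⟩, hnB⟩
    exact ⟨p, ⟨hpA, fun hB => hnB ⟨p, hB, hxp⟩⟩, hxp⟩
  · rintro ⟨p, hp, hxp⟩
    refine ⟨⟨p, hp.1, hxp⟩, ?_⟩
    rintro ⟨q, hqB, hxq⟩
    exact hp.2 (part_unique hdisj hxp hxq ▸ hqB)

lemma biUnion_subset_iff (hdisj : ∀ i j : Fin t, i ≠ j → Disjoint (Vs i) (Vs j))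
    (hne : ∀ i : Fin t, (Vs i).Nonempty) {A B : Finset (Fin t)}
    (h : A.biUnion Vs ⊆ B.biUnion Vs) : A ⊆ B := by
  intro p hp
  obtain ⟨x, hx⟩ := hne p
  have : x ∈ B.biUnion Vs := h (Finset.mem_biUnion.2 ⟨p, hp, hx⟩)
  obtain ⟨q, hqB, hxq⟩ := Finset.mem_biUnion.1 this
  exact part_unique hdisj hxq hx ▸ hqB

lemma biUnion_inj (hdisj : ∀ i j : Fin t, i ≠ j → Disjoint (Vs i) (Vs j))
    (hne : ∀ i : Fin t, (Vs i).Nonempty) {A B : Finset (Fin t)}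
    (h : A.biUnion Vs = B.biUnion Vs) : A = B :=
  Finset.Subset.antisymm (biUnion_subset_iff hdisj hne h.le)
    (biUnion_subset_iff hdisj hne h.ge)

lemma isEdge_image (hdisj : ∀ i j : Fin t, i ≠ j → Disjoint (Vs i) (Vs j))
    {T : Finset (Fin t)} (hT : T.card = s) {c : Fin t → α} (hc : ∀ i, c i ∈ Vs i) :
    IsEdge Vs s (T.image c) := by
  refine ⟨?_, ?_, ?_⟩
  · intro x hx
    obtain ⟨p, _, rfl⟩ := Finset.mem_image.1 hx
    exact Finset.mem_biUnion.2 ⟨p, Finset.mem_univ p, hc p⟩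
  · rw [Finset.card_image_of_injOn, hT]
    intro a _ b _ hab
    exact part_unique hdisj (hab ▸ hc a) (hc b)
  · intro i
    have hsub : T.image c ∩ Vs i ⊆ {c i} := by
      intro x hx
      rw [Finset.mem_inter] at hx
      obtain ⟨p, _, rfl⟩ := Finset.mem_image.1 hx.1
      rw [part_unique hdisj (hc p) hx.2]
      exact Finset.mem_singleton_self _
    calc (T.image c ∩ Vs i).card ≤ ({c i} : Finset α).card := Finset.card_le_card hsub
      _ = 1 := Finset.card_singleton _

lemma indep_sides_lt (hdisj : ∀ i j : Fin t, i ≠ j → Disjoint (Vs i) (Vs j))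
    (hne : ∀ i : Fin t, (Vs i).Nonempty) {F : Finset α} (hF : Indep Vs s F) :
    (Finset.univ.filter fun i : Fin t => (F ∩ Vs i).Nonempty).card < s := by
  by_contra hge
  push_neg at hge
  obtain ⟨T, hTsub, hT⟩ := Finset.exists_subset_card_eq hge
  classical
  set c : Fin t → α := fun i =>
    if h : (F ∩ Vs i).Nonempty then h.choose else (hne i).choose with hcdef
  have hc : ∀ i, c i ∈ Vs i := by
    intro i
    by_cases h : (F ∩ Vs i).Nonempty
    · simp only [hcdef, dif_pos h]
      exact (Finset.mem_inter.1 h.choose_spec).2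
    · simp only [hcdef, dif_neg h]
      exact (hne i).choose_spec
  have hcF : ∀ i ∈ T, c i ∈ F := by
    intro i hi
    have hi' : (F ∩ Vs i).Nonempty := (Finset.mem_filter.1 (hTsub hi)).2
    simp only [hcdef, dif_pos hi']
    exact (Finset.mem_inter.1 hi'.choose_spec).1
  exact hF.2 (T.image c) (isEdge_image hdisj hT hc)
    (fun x hx => by obtain ⟨p, hp, rfl⟩ := Finset.mem_image.1 hx; exact hcF p hp)

lemma indep_biUnion (hdisj : ∀ i j : Fin t, i ≠ j → Disjoint (Vs i) (Vs j))
    {A : Finset (Fin t)} (hA : A.card < s) : Indep Vs s (A.biUnion Vs) := by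
  refine ⟨fun x hx => ?_, fun e he hsub => ?_⟩
  · obtain ⟨p, _, hxp⟩ := Finset.mem_biUnion.1 hx
    exact Finset.mem_biUnion.2 ⟨p, Finset.mem_univ p, hxp⟩
  · have h1 : e ⊆ A.biUnion fun p => e ∩ Vs p := by
      intro x hx
      obtain ⟨p, hpA, hxp⟩ := Finset.mem_biUnion.1 (hsub hx)
      exact Finset.mem_biUnion.2 ⟨p, hpA, Finset.mem_inter.2 ⟨hx, hxp⟩⟩
    have h2 : e.card ≤ A.card := by
      calc e.card ≤ (A.biUnion fun p => e ∩ Vs p).card := Finset.card_le_card h1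
        _ ≤ ∑ p ∈ A, (e ∩ Vs p).card := Finset.card_biUnion_le
        _ ≤ ∑ _p ∈ A, 1 := Finset.sum_le_sum fun p _ => he.2.2 p
        _ = A.card := by simp
    have h3 : e.card = s := he.2.1
    omega

lemma facet_biUnion (hs : 2 ≤ s)
    (hdisj : ∀ i j : Fin t, i ≠ j → Disjoint (Vs i) (Vs j))
    (hne : ∀ i : Fin t, (Vs i).Nonempty)
    {A : Finset (Fin t)} (hA : A.card = s - 1) : IsFacetInd Vs s (A.biUnion Vs) := by
  refine ⟨indep_biUnion hdisj (by omega), fun G hG hsub => ?_⟩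
  refine Finset.Subset.antisymm hsub fun v hv => ?_
  obtain ⟨q, _, hvq⟩ := Finset.mem_biUnion.1 (hG.1 hv)
  by_cases hqA : q ∈ A
  · exact Finset.mem_biUnion.2 ⟨q, hqA, hvq⟩
  · exfalso
    have hins : insert q A ⊆ Finset.univ.filter fun i : Fin t => (G ∩ Vs i).Nonempty := by
      intro p hp
      rw [Finset.mem_insert] at hp
      refine Finset.mem_filter.2 ⟨Finset.mem_univ p, ?_⟩
      rcases hp with rfl | hp
      · exact ⟨v, Finset.mem_inter.2 ⟨hv, hvq⟩⟩
      · obtain ⟨x, hx⟩ := hne p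
        exact ⟨x, Finset.mem_inter.2
          ⟨hsub (Finset.mem_biUnion.2 ⟨p, hp, hx⟩), hx⟩⟩
    have h1 := Finset.card_le_card hins
    rw [Finset.card_insert_of_notMem hqA, hA] at h1
    have h2 := indep_sides_lt hdisj hne hG
    omega

lemma facet_form (hs : 2 ≤ s) (hst : s ≤ t)
    (hdisj : ∀ i j : Fin t, i ≠ j → Disjoint (Vs i) (Vs j))
    (hne : ∀ i : Fin t, (Vs i).Nonempty)
    {F : Finset α} (hF : IsFacetInd Vs s F) :
    ∃ A : Finset (Fin t), A.card = s - 1 ∧ F = A.biUnion Vs := by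
  set S := Finset.univ.filter fun i : Fin t => (F ∩ Vs i).Nonempty with hS
  have hSlt : S.card < s := indep_sides_lt hdisj hne hF.1
  have hcu : (Finset.univ : Finset (Fin t)).card = t := Finset.card_univ.trans (by simp)
  obtain ⟨A, hSA, _, hA⟩ := Finset.exists_subsuperset_card_eq (Finset.subset_univ S)
    (by omega : S.card ≤ s - 1) (by omega : s - 1 ≤ (Finset.univ : Finset (Fin t)).card)
  refine ⟨A, hA, ?_⟩
  apply hF.2
  · exact indep_biUnion hdisj (by omega)
  · intro v hv
    obtain ⟨p, _, hvp⟩ := Finset.mem_biUnion.1 (hF.1.1 hv)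
    have hpS : p ∈ S := Finset.mem_filter.2
      ⟨Finset.mem_univ p, ⟨v, Finset.mem_inter.2 ⟨hv, hvp⟩⟩⟩
    exact Finset.mem_biUnion.2 ⟨p, hSA hpS, hvp⟩

lemma sdiff_insert_erase {A : Finset (Fin t)} {p q : Fin t} (hp : p ∈ A) (hq : q ∉ A) :
    A \ insert q (A.erase p) = {p} := by
  ext x
  simp only [Finset.mem_sdiff, Finset.mem_insert, Finset.mem_erase, Finset.mem_singleton]
  constructor
  · rintro ⟨hxA, hx⟩
    push_neg at hx
    by_contra hxp
    exact (hx.2 hxp hxA).elim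
  · rintro rfl
    exact ⟨hp, by push_neg; exact ⟨fun h => hq (h ▸ hp), fun h => absurd rfl h⟩⟩


lemma fval_swap_lt {A : Finset (Fin t)} {p q : Fin t} (hpA : p ∈ A) (hqA : q ∉ A)
    (hqp : (q : ℕ) < (p : ℕ)) : fval (insert q (A.erase p)) < fval A := by
  have h1 : fval (insert q (A.erase p)) = 2 ^ (q : ℕ) + fval (A.erase p) := by
    simp [fval, Finset.sum_insert
      (show q ∉ A.erase p from fun hm => hqA (Finset.mem_of_mem_erase hm))]
  have h2 : fval (A.erase p) + 2 ^ (p : ℕ) = fval A := by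
    simpa [fval] using Finset.sum_erase_add A (fun i : Fin t => 2 ^ (i : ℕ)) hpA
  have hpow : (2 : ℕ) ^ (q : ℕ) < 2 ^ (p : ℕ) := Nat.pow_lt_pow_right (by norm_num) hqp
  omega


end HyperAux

/-- The independence complex of the complete `s`-uniform `t`-partite
hypergraph is (nonpure) shellable — its facets admit an ordering `F_1, …, F_m` such
that for all `i` and all `j < i` there are a vertex `v ∈ F_i \ F_j` and `k < i` with
`F_i \ F_k = {v}` — if and only if at least `t - 1` of the sides are singletons. -/
theorem shellable_iff_t_sub_one_singleton_sides
    {α : Type*} [DecidableEq α] {t s : ℕ} (hs : 2 ≤ s) (hst : s ≤ t)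
    (Vs : Fin t → Finset α)
    (hdisj : ∀ i j : Fin t, i ≠ j → Disjoint (Vs i) (Vs j))
    (hne : ∀ i : Fin t, (Vs i).Nonempty) :
    (∃ (m : ℕ) (F : Fin m → Finset α),
        Function.Injective F ∧
        (∀ G : Finset α, IsFacetInd Vs s G ↔ ∃ i : Fin m, F i = G) ∧
        (∀ i j : Fin m, j < i →
          ∃ v ∈ F i \ F j, ∃ k : Fin m, k < i ∧ F i \ F k = {v})) ↔
      ∃ j : Fin t, ∀ i : Fin t, i ≠ j → (Vs i).card = 1 := by
  classical
  constructor
  · rintro ⟨m, F, hinj, henum, hshell⟩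
    by_contra hnot
    push_neg at hnot
    have ht2 : 2 ≤ t := le_trans hs hst
    obtain ⟨j1, hj1ne, hj1⟩ := hnot ⟨0, by omega⟩
    obtain ⟨j2, hj2ne, hj2⟩ := hnot j1
    have hcard1 : 2 ≤ (Vs j1).card := by
      have := Finset.card_pos.2 (hne j1); omega
    have hcard2 : 2 ≤ (Vs j2).card := by
      have := Finset.card_pos.2 (hne j2); omega
    have hpair : ({j1, j2} : Finset (Fin t)).card = 2 := Finset.card_pair (Ne.symm hj2ne)
    have hcu : ((Finset.univ : Finset (Fin t)) \ {j1, j2}).card = t - 2 := by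
      rw [Finset.card_sdiff_of_subset (Finset.subset_univ _), hpair, Finset.card_univ,
        Fintype.card_fin]
    obtain ⟨C, hCsub, hC⟩ := Finset.exists_subset_card_eq
      (show s - 2 ≤ ((Finset.univ : Finset (Fin t)) \ {j1, j2}).card by omega)
    have hj1C : j1 ∉ C := fun h => by
      have := hCsub h; rw [Finset.mem_sdiff] at this
      exact this.2 (Finset.mem_insert_self _ _)
    have hj2C : j2 ∉ C := fun h => by
      have := hCsub h; rw [Finset.mem_sdiff] at this
      exact this.2 (Finset.mem_insert.2 (Or.inr (Finset.mem_singleton_self _)))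
    have hAcard : (insert j1 C).card = s - 1 := by
      rw [Finset.card_insert_of_notMem hj1C, hC]; omega
    have hBcard : (insert j2 C).card = s - 1 := by
      rw [Finset.card_insert_of_notMem hj2C, hC]; omega
    have hAB : insert j1 C \ insert j2 C = {j1} := by
      ext x
      simp only [Finset.mem_sdiff, Finset.mem_insert, Finset.mem_singleton]
      constructor
      · rintro ⟨hx1 | hx1, hx2⟩
        · exact hx1
        · exact absurd (Or.inr hx1) hx2
      · rintro rfl
        exact ⟨Or.inl rfl, fun h => h.elim (fun h => hj2ne h.symm) hj1C⟩
    have hBA : insert j2 C \ insert j1 C = {j2} := by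
      ext x
      simp only [Finset.mem_sdiff, Finset.mem_insert, Finset.mem_singleton]
      constructor
      · rintro ⟨hx1 | hx1, hx2⟩
        · exact hx1
        · exact absurd (Or.inr hx1) hx2
      · rintro rfl
        exact ⟨Or.inl rfl, fun h => h.elim hj2ne hj2C⟩
    -- key auxiliary: a facet pair differing in one big side kills shellability
    have key : ∀ (X Y : Finset (Fin t)) (jx : Fin t), X \ Y = {jx} →
        2 ≤ (Vs jx).card → ∀ iX iY : Fin m, F iX = X.biUnion Vs →
        F iY = Y.biUnion Vs → iY < iX → False := by
      intro X Y jx hXY hjxcard iX iY hFX hFY hlt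
      obtain ⟨v, hv, k, hk, hFk⟩ := hshell iX iY hlt
      rw [hFX, hFY, diff_biUnion hdisj, hXY, Finset.singleton_biUnion] at hv
      have hfacet : IsFacetInd Vs s (F k) := (henum (F k)).2 ⟨k, rfl⟩
      obtain ⟨Ak, hAk, hFkform⟩ := facet_form hs hst hdisj hne hfacet
      rw [hFX, hFkform, diff_biUnion hdisj] at hFk
      have hvmem : v ∈ (X \ Ak).biUnion Vs := hFk ▸ Finset.mem_singleton_self v
      obtain ⟨p, hpmem, hvp⟩ := Finset.mem_biUnion.1 hvmem
      have hpj : p = jx := part_unique hdisj hvp hv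
      have hsubv : Vs jx ⊆ {v} := by
        rw [← hFk]
        intro x hx
        exact Finset.mem_biUnion.2 ⟨jx, hpj ▸ hpmem, hx⟩
      have := Finset.card_le_card hsubv
      rw [Finset.card_singleton] at this
      omega
    obtain ⟨iA, hiA⟩ := (henum ((insert j1 C).biUnion Vs)).1
      (facet_biUnion hs hdisj hne hAcard)
    obtain ⟨iB, hiB⟩ := (henum ((insert j2 C).biUnion Vs)).1
      (facet_biUnion hs hdisj hne hBcard)
    have hiAB : iA ≠ iB := by
      intro h
      have : insert j1 C = insert j2 C :=
        biUnion_inj hdisj hne (by rw [← hiA, ← hiB, h])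
      have : j1 ∈ insert j2 C := this ▸ Finset.mem_insert_self j1 C
      exact (Finset.mem_insert.1 this).elim (fun h => hj2ne h.symm) hj1C
    rcases lt_or_gt_of_ne hiAB with h | h
    · exact key _ _ j2 hBA hcard2 iB iA hiB hiA h
    · exact key _ _ j1 hAB hcard1 iA iB hiA hiB h
  · rintro ⟨j, hj⟩
    set keyf : Finset (Fin t) → ℕ :=
      fun A => (if j ∈ A then 0 else 2 ^ t) + fval A with hkeyf
    have keyf_inj : ∀ A B : Finset (Fin t), keyf A = keyf B → A = B := by
      intro A B hAB
      have hA := fval_lt A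
      have hB := fval_lt B
      by_cases h1 : j ∈ A <;> by_cases h2 : j ∈ B
      · exact fval_injective (by simpa [hkeyf, h1, h2] using hAB)
      · exfalso; simp only [hkeyf, if_pos h1, if_neg h2] at hAB; omega
      · exfalso; simp only [hkeyf, if_neg h1, if_pos h2] at hAB; omega
      · exact fval_injective (by simpa [hkeyf, h1, h2] using hAB)
    set r : Finset (Fin t) → Finset (Fin t) → Prop :=
      fun A B => keyf A ≤ keyf B with hr
    haveI : DecidableRel r := fun A B => Nat.decLe _ _
    haveI : IsTrans (Finset (Fin t)) r := ⟨fun _ _ _ => Nat.le_trans⟩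
    haveI : IsAntisymm (Finset (Fin t)) r :=
      ⟨fun a b h1 h2 => keyf_inj a b (Nat.le_antisymm h1 h2)⟩
    haveI : IsTotal (Finset (Fin t)) r := ⟨fun a b => Nat.le_total _ _⟩
    set l : List (Finset (Fin t)) :=
      Finset.sort (Finset.univ.powersetCard (s - 1)) r with hl
    have hsorted : l.Pairwise r := Finset.pairwise_sort _ r
    have hnodup : l.Nodup := Finset.sort_nodup _ r
    have hmeml : ∀ A : Finset (Fin t), A ∈ l ↔ A.card = s - 1 := by
      intro A
      rw [hl, Finset.mem_sort, Finset.mem_powersetCard_univ]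
    have hgetcard : ∀ i : Fin l.length, (l.get i).card = s - 1 :=
      fun i => (hmeml _).1 (List.mem_iff_get.2 ⟨i, rfl⟩)
    have hgetinj : ∀ i k : Fin l.length, l.get i = l.get k → i = k :=
      fun i k h => List.nodup_iff_injective_get.1 hnodup h
    refine ⟨l.length, fun i => (l.get i).biUnion Vs, ?_, ?_, ?_⟩
    · intro i k h
      exact hgetinj i k (biUnion_inj hdisj hne h)
    · intro G
      constructor
      · intro hG
        obtain ⟨A, hA, rfl⟩ := facet_form hs hst hdisj hne hG
        obtain ⟨n, hn⟩ := List.mem_iff_get.1 ((hmeml A).2 hA)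
        exact ⟨n, by show (l.get n).biUnion Vs = A.biUnion Vs; rw [hn]⟩
      · rintro ⟨i, rfl⟩
        exact facet_biUnion hs hdisj hne (hgetcard i)
    · intro i k hki
      have hAcard := hgetcard i
      have hBcard := hgetcard k
      have hABne : l.get i ≠ l.get k := by
        intro h
        exact absurd (hgetinj i k h) (ne_of_gt hki)
      have hrel : keyf (l.get k) ≤ keyf (l.get i) := hsorted.rel_get_of_lt hki
      have hkeylt : keyf (l.get k) < keyf (l.get i) :=
        lt_of_le_of_ne hrel fun h => hABne (keyf_inj _ _ h.symm)
      have hmain : ∃ p q : Fin t, p ∈ l.get i ∧ p ∉ l.get k ∧ p ≠ j ∧ q ∉ l.get i ∧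
          keyf (insert q ((l.get i).erase p)) < keyf (l.get i) := by
        set A := l.get i with hA
        set B := l.get k with hB
        have hBAne : (A \ B).Nonempty := by
          rw [Finset.sdiff_nonempty]
          intro hsub
          exact hABne (Finset.eq_of_subset_of_card_le hsub (by omega))
        by_cases hjA : j ∈ A
        · have hjB : j ∈ B := by
            by_contra hjB
            have h1 : keyf A = fval A := by simp [hkeyf, hjA]
            have h2 : keyf B = 2 ^ t + fval B := by simp [hkeyf, hjB]
            have := fval_lt A
            omega
          have hflt : fval B < fval A := by
            have h1 : keyf A = fval A := by simp [hkeyf, hjA]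
            have h2 : keyf B = fval B := by simp [hkeyf, hjB]
            omega
          obtain ⟨p, hpA, hpB, hq⟩ := exists_swap_elt hflt
          have hBA : (B \ A).Nonempty := by
            rw [Finset.sdiff_nonempty]
            intro hsub
            exact hABne (Finset.eq_of_subset_of_card_le hsub (by omega)).symm
          obtain ⟨q, hqmem⟩ := hBA
          rw [Finset.mem_sdiff] at hqmem
          have hqp : (q : ℕ) < (p : ℕ) := hq q hqmem.1 hqmem.2
          have hpj : p ≠ j := fun h => hpB (h ▸ hjB)
          refine ⟨p, q, hpA, hpB, hpj, hqmem.2, ?_⟩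
          have hjk : j ∈ insert q (A.erase p) :=
            Finset.mem_insert.2 (Or.inr (Finset.mem_erase.2 ⟨Ne.symm hpj, hjA⟩))
          have hk1 : keyf (insert q (A.erase p)) = fval (insert q (A.erase p)) := by
            simp [hkeyf, hjk]
          have hA1 : keyf A = fval A := by simp [hkeyf, hjA]
          have := fval_swap_lt hpA hqmem.2 hqp
          omega
        · by_cases hjB : j ∈ B
          · obtain ⟨p, hpm⟩ := hBAne
            rw [Finset.mem_sdiff] at hpm
            have hpj : p ≠ j := fun h => hjA (h ▸ hpm.1)
            refine ⟨p, j, hpm.1, hpm.2, hpj, hjA, ?_⟩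
            have hk1 : keyf (insert j (A.erase p)) = fval (insert j (A.erase p)) := by
              simp [hkeyf]
            have hA1 : keyf A = 2 ^ t + fval A := by simp [hkeyf, hjA]
            have := fval_lt (insert j (A.erase p))
            omega
          · have hflt : fval B < fval A := by
              have h1 : keyf A = 2 ^ t + fval A := by simp [hkeyf, hjA]
              have h2 : keyf B = 2 ^ t + fval B := by simp [hkeyf, hjB]
              omega
            obtain ⟨p, hpA, hpB, hq⟩ := exists_swap_elt hflt
            have hBA : (B \ A).Nonempty := by
              rw [Finset.sdiff_nonempty]
              intro hsub
              exact hABne (Finset.eq_of_subset_of_card_le hsub (by omega)).symm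
            obtain ⟨q, hqmem⟩ := hBA
            rw [Finset.mem_sdiff] at hqmem
            have hqp : (q : ℕ) < (p : ℕ) := hq q hqmem.1 hqmem.2
            have hpj : p ≠ j := fun h => hjA (h ▸ hpA)
            refine ⟨p, q, hpA, hpB, hpj, hqmem.2, ?_⟩
            have hjk : j ∉ insert q (A.erase p) := by
              rw [Finset.mem_insert]
              rintro (h | h)
              · exact hjB (h ▸ hqmem.1)
              · exact hjA (Finset.mem_of_mem_erase h)
            have hk1 : keyf (insert q (A.erase p)) =
                2 ^ t + fval (insert q (A.erase p)) := by simp [hkeyf, hjk]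
            have hA1 : keyf A = 2 ^ t + fval A := by simp [hkeyf, hjA]
            have := fval_swap_lt hpA hqmem.2 hqp
            omega
      obtain ⟨p, q, hpA, hpB, hpj, hqA, hklt⟩ := hmain
      have hKcard : (insert q ((l.get i).erase p)).card = s - 1 := by
        rw [Finset.card_insert_of_notMem
          (fun hm => hqA (Finset.mem_of_mem_erase hm)),
          Finset.card_erase_of_mem hpA, hAcard]
        omega
      obtain ⟨n, hn⟩ := List.mem_iff_get.1 ((hmeml _).2 hKcard)
      have hnl : n < i := by
        rcases lt_trichotomy n i with h | h | h
        · exact h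
        · exfalso
          have hKA : insert q ((l.get i).erase p) = l.get i := by rw [← hn, h]
          rw [hKA] at hklt
          exact lt_irrefl _ hklt
        · exfalso
          have := hsorted.rel_get_of_lt h
          rw [hn] at this
          exact absurd hklt (not_lt.2 this)
      obtain ⟨v, hVp⟩ := Finset.card_eq_one.1 (hj p hpj)
      refine ⟨v, ?_, n, hnl, ?_⟩
      · show v ∈ (l.get i).biUnion Vs \ (l.get k).biUnion Vs
        rw [diff_biUnion hdisj]
        exact Finset.mem_biUnion.2
          ⟨p, Finset.mem_sdiff.2 ⟨hpA, hpB⟩, hVp ▸ Finset.mem_singleton_self v⟩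
      · show (l.get i).biUnion Vs \ (l.get n).biUnion Vs = {v}
        rw [hn, diff_biUnion hdisj, sdiff_insert_erase hpA hqA,
          Finset.singleton_biUnion, hVp]
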